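/- Let D be a digraph missing disjoint paths, and let {a,b}, {x,y}, {z,t} be missing edges of D with {x,y} ≠ {z,t}. If {a,b} loses to {x,y} and {a,b} loses to {z,t}, then {x,y} ∩ {z,t} ≠ ∅, i.e., the missing edges {x,y} and {z,t} share a vertex. -/

import Mathlib

namespace SSNC

variable {V : Type*}

/-- The arc relation of an oriented graph: no digons (hence irreflexive). -/
def Oriented (A : V → V → Prop) : Prop := ∀ u v, A u v → ¬ A v u

/-- `u ∈ N⁺⁺(v)`: the second out-neighborhood. -/
def SecondOut (A : V → V → Prop) (v u : V) : Prop :=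
  u ≠ v ∧ ¬ A v u ∧ ∃ w, A v w ∧ A w u

/-- `{u, v}` is a missing edge of the digraph. -/
def IsMissing (A : V → V → Prop) (u v : V) : Prop :=
  u ≠ v ∧ ¬ A u v ∧ ¬ A v u

/-- The losing relation for a fixed labeling of the two pairs: `a→x`, `b→y`,
`y ∉ N⁺(a) ∪ N⁺⁺(a)` and `x ∉ N⁺(b) ∪ N⁺⁺(b)`. -/
def LosesOrd (A : V → V → Prop) (a b x y : V) : Prop :=
  A a x ∧ A b y ∧ ¬ A a y ∧ ¬ SecondOut A a y ∧ ¬ A b x ∧ ¬ SecondOut A b x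

/-- The missing edge `{a,b}` loses to the missing edge `{x,y}` (for some labeling). -/
def Loses (A : V → V → Prop) (a b x y : V) : Prop :=
  LosesOrd A a b x y ∨ LosesOrd A a b y x

/-- Degree of a vertex in the missing graph. -/
noncomputable def mdeg (A : V → V → Prop) (v : V) : ℕ :=
  ({w | IsMissing A v w} : Set V).ncard

/-- The missing graph, as a simple graph. -/
def missingGraph (A : V → V → Prop) : SimpleGraph V where
  Adj u v := IsMissing A u v
  symm := by
    constructor
    rintro u v ⟨h1, h2, h3⟩
    exact ⟨h1.symm, h3, h2⟩
  loopless := by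
    constructor
    rintro v ⟨h1, -, -⟩
    exact h1 rfl

/-- The missing graph is a vertex-disjoint union of paths
(equivalently: acyclic with maximum degree at most 2). -/
def MissingDisjointPaths (A : V → V → Prop) : Prop :=
  (missingGraph A).IsAcyclic ∧ ∀ v, mdeg A v ≤ 2

/-- The missing graph is a vertex-disjoint union of paths on exactly 3 vertices
(equivalently: every missing edge has one endpoint of missing-degree 1 and one of
missing-degree 2). -/
def MissingPaths2 (A : V → V → Prop) : Prop :=
  ∀ u v, IsMissing A u v →
    (mdeg A u = 1 ∧ mdeg A v = 2) ∨ (mdeg A u = 2 ∧ mdeg A v = 1)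

/-- The missing graph is a vertex-disjoint union of paths on 2 or 3 vertices. -/
def MissingPathsLe2 (A : V → V → Prop) : Prop :=
  ∀ u v, IsMissing A u v →
    (mdeg A u = 1 ∧ mdeg A v = 1) ∨ (mdeg A u = 1 ∧ mdeg A v = 2) ∨
    (mdeg A u = 2 ∧ mdeg A v = 1)

/-- Out-degree of the missing edge `{u,v}` in the dependency digraph `Δ(D)`:
the number of missing edges it loses to. -/
noncomputable def outDegDelta (A : V → V → Prop) (u v : V) : ℕ :=
  ({f : Sym2 V | ∃ x y, f = s(x, y) ∧ IsMissing A x y ∧ Loses A u v x y}).ncard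

/-- In-degree of the missing edge `{u,v}` in the dependency digraph `Δ(D)`:
the number of missing edges losing to it. -/
noncomputable def inDegDelta (A : V → V → Prop) (u v : V) : ℕ :=
  ({f : Sym2 V | ∃ x y, f = s(x, y) ∧ IsMissing A x y ∧ Loses A x y u v}).ncard

/-- `C = a₁b₁c₁, …, a_k b_k c_k` is a double cycle in `Δ(D)`: pairwise vertex-disjoint
missing paths of length 2 (`k ≥ 2`), where each of `{aᵢ,bᵢ}, {bᵢ,cᵢ}` loses to each of
`{aᵢ₊₁,bᵢ₊₁}, {bᵢ₊₁,cᵢ₊₁}` (indices modulo `k`). -/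
def IsDoubleCycle (A : V → V → Prop) (k : ℕ) (a b c : ZMod k → V) : Prop :=
  2 ≤ k ∧
  (∀ i, IsMissing A (a i) (b i) ∧ IsMissing A (b i) (c i) ∧ a i ≠ c i) ∧
  (∀ i j, i ≠ j → Disjoint ({a i, b i, c i} : Set V) {a j, b j, c j}) ∧
  (∀ i, Loses A (a i) (b i) (a (i + 1)) (b (i + 1)) ∧
        Loses A (a i) (b i) (b (i + 1)) (c (i + 1)) ∧
        Loses A (b i) (c i) (a (i + 1)) (b (i + 1)) ∧
        Loses A (b i) (c i) (b (i + 1)) (c (i + 1)))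

/-- `K(C)` for a double cycle `C`. -/
def Kset {k : ℕ} (a b c : ZMod k → V) : Set V :=
  {v | ∃ i, v = a i ∨ v = b i ∨ v = c i}

/-- Out-neighborhood in the subdigraph induced on `K`. -/
def outIn (A : V → V → Prop) (K : Set V) (v : V) : Set V := {u | u ∈ K ∧ A v u}

/-- In-neighborhood in the subdigraph induced on `K`. -/
def inIn (A : V → V → Prop) (K : Set V) (v : V) : Set V := {u | u ∈ K ∧ A u v}

/-- Second out-neighborhood in the subdigraph induced on `K`. -/
def secondOutIn (A : V → V → Prop) (K : Set V) (v : V) : Set V :=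
  {u | u ∈ K ∧ u ≠ v ∧ ¬ A v u ∧ ∃ w ∈ K, A v w ∧ A w u}

/-- Second in-neighborhood in the subdigraph induced on `K`. -/
def secondInIn (A : V → V → Prop) (K : Set V) (v : V) : Set V :=
  {u | u ∈ K ∧ u ≠ v ∧ ¬ A u v ∧ ∃ w ∈ K, A u w ∧ A w v}

theorem _root_.SimpleGraph.IsAcyclic.eq_of_mem_commonNeighbors {W : Type*} {G : SimpleGraph W}
    (hG : G.IsAcyclic) {u v p q : W} (huv : u ≠ v)
    (hp : p ∈ G.commonNeighbors u v) (hq : q ∈ G.commonNeighbors u v) : p = q := by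
  rw [SimpleGraph.mem_commonNeighbors] at hp hq
  have hpath (w : W) (huw : G.Adj u w) (hwv : G.Adj w v) :
      (SimpleGraph.Walk.cons huw (SimpleGraph.Walk.cons hwv .nil)).IsPath := by
    simp [SimpleGraph.Walk.isPath_def, huw.ne, hwv.ne, huv]
  have := (hG.subsingleton_path u v).elim ⟨_, hpath p hp.1 hp.2.symm⟩ ⟨_, hpath q hq.1 hq.2.symm⟩
  simpa using congrArg (fun r : G.Path u v => r.1.support) this

lemma IsMissing.symm {A : V → V → Prop} {u v : V} (h : IsMissing A u v) : IsMissing A v u :=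
  ⟨h.1.symm, h.2.2, h.2.1⟩

lemma LosesOrd.swap {A : V → V → Prop} {a b x y : V} (h : LosesOrd A a b x y) :
    LosesOrd A b a y x :=
  ⟨h.2.1, h.1, h.2.2.2.2.1, h.2.2.2.2.2, h.2.2.1, h.2.2.2.1⟩

/-- An arc between `y` and `z` would put `z` into `N⁺⁺(b)` or `y` into `N⁺⁺(a)`. -/
lemma isMissing_of_losesOrd {A : V → V → Prop} {a b x y z t : V} (hab : IsMissing A a b)
    (h₁ : LosesOrd A a b x y) (h₂ : LosesOrd A a b z t) (hyz : y ≠ z) : IsMissing A y z := by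
  obtain ⟨-, hby, hay, hsay, -, -⟩ := h₁
  obtain ⟨haz, -, -, -, hbz, hsbz⟩ := h₂
  have hya : y ≠ a := by rintro rfl; exact hab.2.2 hby
  have hzb : z ≠ b := by rintro rfl; exact hab.2.1 haz
  exact ⟨hyz, fun h => hsbz ⟨hzb, hbz, y, hby, h⟩, fun h => hsay ⟨hya, hay, z, haz, h⟩⟩

/-- If `{x,y}` and `{z,t}` were disjoint, `x y z t` would be a 4-cycle of missing edges. -/
lemma LosesOrd.inter_nonempty {A : V → V → Prop} {a b x y z t : V}
    (h₁ : LosesOrd A a b x y) (h₂ : LosesOrd A a b z t) (hA : (missingGraph A).IsAcyclic)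
    (hab : IsMissing A a b) (hxy : IsMissing A x y) (hzt : IsMissing A z t) :
    (({x, y} : Set V) ∩ ({z, t} : Set V)).Nonempty := by
  by_contra hdisj
  have hne {u v : V} (hu : u = x ∨ u = y) (hv : v = z ∨ v = t) : u ≠ v := by
    rintro rfl; exact hdisj ⟨u, by rcases hu with rfl | rfl <;> rcases hv with rfl | rfl <;> simp⟩
  have hyz : IsMissing A y z := isMissing_of_losesOrd hab h₁ h₂ (hne (.inr rfl) (.inl rfl))
  have hxt : IsMissing A x t :=
    isMissing_of_losesOrd hab.symm h₁.swap h₂.swap (hne (.inl rfl) (.inr rfl))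
  refine hne (.inr rfl) (.inr rfl) (hA.eq_of_mem_commonNeighbors (hne (.inl rfl) (.inl rfl)) ?_ ?_)
  · exact (SimpleGraph.mem_commonNeighbors _).2 ⟨hxy, hyz.symm⟩
  · exact (SimpleGraph.mem_commonNeighbors _).2 ⟨hxt, hzt⟩

theorem stmt1_general {V : Type*} (A : V → V → Prop)
    (hP : MissingDisjointPaths A) (a b x y z t : V)
    (hab : IsMissing A a b) (hxy : IsMissing A x y) (hzt : IsMissing A z t)
    (h1 : Loses A a b x y) (h2 : Loses A a b z t) :
    (({x, y} : Set V) ∩ ({z, t} : Set V)).Nonempty := by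
  rcases h1 with h1 | h1 <;> rcases h2 with h2 | h2
  · exact h1.inter_nonempty h2 hP.1 hab hxy hzt
  · rw [Set.pair_comm z t]
    exact h1.inter_nonempty h2 hP.1 hab hxy hzt.symm
  · rw [Set.pair_comm x y]
    exact h1.inter_nonempty h2 hP.1 hab hxy.symm hzt
  · rw [Set.pair_comm x y, Set.pair_comm z t]
    exact h1.inter_nonempty h2 hP.1 hab hxy.symm hzt.symm

/-- Lemma 4.1: common out-neighbors in `Δ(D)` of a missing edge share a vertex. -/
theorem stmt1 {V : Type*} [Fintype V] (A : V → V → Prop) (hA : Oriented A)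
    (hP : MissingDisjointPaths A) (a b x y z t : V)
    (hab : IsMissing A a b) (hxy : IsMissing A x y) (hzt : IsMissing A z t)
    (hne : ({x, y} : Set V) ≠ ({z, t} : Set V))
    (h1 : Loses A a b x y) (h2 : Loses A a b z t) :
    (({x, y} : Set V) ∩ ({z, t} : Set V)).Nonempty :=
  stmt1_general A hP a b x y z t hab hxy hzt h1 h2

end SSNC
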